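/- arXiv:2511.00666 — 9 statements merged into one kernel-verified Lean document; each statement's English description precedes it below -/
import Mathlib

section
/- Let P be a nonzero polynomial in two complex variables ∂ and x (i.e. a nonzero element of 𝔤𝔠₁). If P satisfies the Virasoro identity, i.e. for all complex numbers d, l, t one has P(−l, t+d+l)·P(d+l, t) − P(d+l, t−l)·P(−l, t) = (d+2l)·P(d, t), then there exist complex numbers a, b such that P(∂, x) = a·∂ + b + x for all complex ∂, x. (Every Virasoro element of 𝔤𝔠₁ has the form (a∂+b)J⁰ + J¹.) -/
/-- Evaluation of a polynomial in two variables (∂ and x) at a pair of complex numbers. -/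
noncomputable def ev (P : MvPolynomial (Fin 2) ℂ) (d x : ℂ) : ℂ :=
  MvPolynomial.eval ![d, x] P

/-- View a polynomial in two variables as a polynomial in x with coefficients
polynomials in ∂. -/
noncomputable def toP (P : MvPolynomial (Fin 2) ℂ) : Polynomial (Polynomial ℂ) :=
  MvPolynomial.aeval ![Polynomial.C Polynomial.X, Polynomial.X] P

lemma ev_toP (P : MvPolynomial (Fin 2) ℂ) (d x : ℂ) :
    ev P d x = Polynomial.eval₂ (Polynomial.evalRingHom d) x (toP P) := by
  unfold ev toP
  induction P using MvPolynomial.induction_on with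
  | C a => simp
  | add p q hp hq => simp [hp, hq, Polynomial.eval₂_add]
  | mul_X p i hp =>
      fin_cases i <;>
        simp [hp, Polynomial.eval₂_mul]

lemma eq_zero_of_eval (r : Polynomial ℂ) (h : ∀ z, r.eval z = 0) : r = 0 :=
  Polynomial.funext fun z => by simp [h z]

lemma exists_eval_ne (r : Polynomial ℂ) (hr : r ≠ 0) : ∃ z, r.eval z ≠ 0 := by
  by_contra h
  push_neg at h
  exact hr (eq_zero_of_eval r h)

lemma taylor_coeff_top (v : Polynomial ℂ) (m : ℕ) (hv : v.natDegree ≤ m) (c : ℂ) :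
    (Polynomial.taylor c v).coeff m = v.coeff m := by
  rw [Polynomial.taylor_coeff]
  have h1 : ((Polynomial.hasseDeriv m) v).natDegree < 1 := by
    have := Polynomial.natDegree_hasseDeriv_le v m
    omega
  rw [Polynomial.eval_eq_sum_range' h1]
  simp [Polynomial.hasseDeriv_coeff]

lemma taylor_coeff_pred (v : Polynomial ℂ) (m : ℕ) (hm : 1 ≤ m) (hv : v.natDegree ≤ m) (c : ℂ) :
    (Polynomial.taylor c v).coeff (m - 1) = v.coeff (m - 1) + m * c * v.coeff m := by
  rw [Polynomial.taylor_coeff]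
  have h1 : ((Polynomial.hasseDeriv (m - 1)) v).natDegree < 2 := by
    have := Polynomial.natDegree_hasseDeriv_le v (m - 1)
    omega
  rw [Polynomial.eval_eq_sum_range' h1]
  rw [Finset.sum_range_succ, Finset.sum_range_one]
  rw [Polynomial.hasseDeriv_coeff, Polynomial.hasseDeriv_coeff]
  have e1 : 0 + (m - 1) = m - 1 := by omega
  have e2 : 1 + (m - 1) = m := by omega
  rw [e1, e2]
  have e3 : m.choose (m - 1) = m := by
    have := Nat.choose_symm (n := m) (k := 1) hm
    simpa [Nat.choose_one_right] using this
  simp [Nat.choose_self, e3]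
  ring

/-- Every Virasoro element of 𝔤𝔠₁ has the form (a∂+b)J⁰ + J¹. -/
theorem stmt_0 (P : MvPolynomial (Fin 2) ℂ) (hP : P ≠ 0)
    (hvir : ∀ d l t : ℂ,
      ev P (-l) (t + d + l) * ev P (d + l) t - ev P (d + l) (t - l) * ev P (-l) t
        = (d + 2 * l) * ev P d t) :
    ∃ a b : ℂ, ∀ d x : ℂ, ev P d x = a * d + b + x := by
  classical
  set p := toP P with hpdef
  have hev : ∀ d x : ℂ, ev P d x = (p.map (Polynomial.evalRingHom d)).eval x := by
    intro d x; rw [ev_toP, Polynomial.eval_map]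
  -- p is nonzero
  have hPex : ∃ d x : ℂ, ev P d x ≠ 0 := by
    by_contra h
    push_neg at h
    apply hP
    apply MvPolynomial.funext
    intro v
    have hvv : ![v 0, v 1] = v := funext fun i => by fin_cases i <;> rfl
    have := h (v 0) (v 1)
    rw [ev, hvv] at this
    simpa using this
  have hp0 : p ≠ 0 := by
    obtain ⟨d₀, x₀, h⟩ := hPex
    intro hz
    rw [hev, hz] at h
    simp at h
  -- choose t₀ with p.eval (C t₀) ≠ 0
  have hex : ∃ t₀ : ℂ, p.eval (Polynomial.C t₀) ≠ 0 := by
    by_contra h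
    push_neg at h
    apply hp0
    apply Polynomial.eq_zero_of_infinite_isRoot
    refine Set.Infinite.mono ?_ (Set.infinite_range_of_injective Polynomial.C_injective)
    rintro _ ⟨t, rfl⟩
    exact h t
  obtain ⟨t₀, ht₀⟩ := hex
  have hF_eval : ∀ d : ℂ, (p.eval (Polynomial.C t₀)).eval d = ev P d t₀ := by
    intro d
    rw [hev]
    induction p using Polynomial.induction_on' with
    | add f g hf hg => simp [hf, hg]
    | monomial n a => simp [Polynomial.eval_monomial, Polynomial.map_monomial]
  set q : Polynomial ℂ := p.map (Polynomial.evalRingHom 0) with hq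
  have hq_eval : ∀ x, q.eval x = ev P 0 x := fun x => (hev 0 x).symm
  set G : Polynomial ℂ := q.comp (Polynomial.X + Polynomial.C t₀)
      - Polynomial.C (ev P 0 t₀) - Polynomial.X with hG
  have hG_eval : ∀ d : ℂ, G.eval d = ev P 0 (d + t₀) - ev P 0 t₀ - d := by
    intro d
    simp [hG, Polynomial.eval_comp, hq_eval]
  have hFG : p.eval (Polynomial.C t₀) * G = 0 := by
    apply eq_zero_of_eval
    intro d
    rw [Polynomial.eval_mul, hF_eval, hG_eval]
    have h := hvir d 0 t₀
    simp only [neg_zero, add_zero, sub_zero, mul_zero] at h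
    rw [add_comm d t₀]
    linear_combination h
  have hG0 : G = 0 := by
    rcases mul_eq_zero.mp hFG with h | h
    · exact absurd h ht₀
    · exact h
  set b : ℂ := ev P 0 t₀ - t₀ with hbdef
  have hstep1 : ∀ x : ℂ, ev P 0 x = x + b := by
    intro x
    have h3 := hG_eval (x - t₀)
    rw [hG0, Polynomial.eval_zero] at h3
    have h2 : x - t₀ + t₀ = x := by ring
    rw [h2] at h3
    rw [hbdef]
    linear_combination -h3
  -- degree in x is at most 1
  have hdeg : p.natDegree ≤ 1 := by
    by_contra hdegc
    push_neg at hdegc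
    set m := p.natDegree with hm
    have hm2 : 2 ≤ m := hdegc
    set A := p.leadingCoeff with hA
    have hAne : A ≠ 0 := Polynomial.leadingCoeff_ne_zero.mpr hp0
    have hcompne : A.comp (-Polynomial.X) ≠ 0 := by
      intro h
      apply hAne
      apply eq_zero_of_eval
      intro z
      have := congrArg (Polynomial.eval (-z)) h
      simpa [Polynomial.eval_comp] using this
    have hBne : Polynomial.X * (A * A.comp (-Polynomial.X)) ≠ 0 :=
      mul_ne_zero Polynomial.X_ne_zero (mul_ne_zero hAne hcompne)
    obtain ⟨l₀, hl₀⟩ := exists_eval_ne _ hBne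
    rw [Polynomial.eval_mul, Polynomial.eval_mul, Polynomial.eval_comp] at hl₀
    simp only [Polynomial.eval_X, Polynomial.eval_neg] at hl₀
    have hl0 : l₀ ≠ 0 := fun h => hl₀ (by rw [h]; ring)
    have hAl : A.eval l₀ ≠ 0 := fun h => hl₀ (by rw [h]; ring)
    have hAml : A.eval (-l₀) ≠ 0 := fun h => hl₀ (by rw [h]; ring)
    set u := p.map (Polynomial.evalRingHom l₀) with hu
    set v := p.map (Polynomial.evalRingHom (-l₀)) with hv
    have hu_eval : ∀ t, u.eval t = ev P l₀ t := fun t => (hev l₀ t).symm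
    have hv_eval : ∀ t, v.eval t = ev P (-l₀) t := fun t => (hev (-l₀) t).symm
    have hudeg : u.natDegree = m :=
      Polynomial.natDegree_map_of_leadingCoeff_ne_zero _ (by simpa using hAl)
    have hvdeg : v.natDegree = m :=
      Polynomial.natDegree_map_of_leadingCoeff_ne_zero _ (by simpa using hAml)
    have hucoeff : u.coeff m = A.eval l₀ := by
      rw [hu, Polynomial.coeff_map]; rfl
    have hvcoeff : v.coeff m = A.eval (-l₀) := by
      rw [hv, Polynomial.coeff_map]; rfl
    have hulead : u.leadingCoeff = A.eval l₀ := by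
      rw [Polynomial.leadingCoeff, hudeg, hucoeff]
    have hvlead : v.leadingCoeff = A.eval (-l₀) := by
      rw [Polynomial.leadingCoeff, hvdeg, hvcoeff]
    -- difference polynomials
    set Dv := Polynomial.taylor l₀ v - v with hDv
    set Du := Polynomial.taylor (-l₀) u - u with hDu
    have hDvcoeff : Dv.coeff (m - 1) = m * l₀ * A.eval (-l₀) := by
      rw [hDv, Polynomial.coeff_sub, taylor_coeff_pred v m (by omega) hvdeg.le, hvcoeff]
      ring
    have hDucoeff : Du.coeff (m - 1) = m * (-l₀) * A.eval l₀ := by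
      rw [hDu, Polynomial.coeff_sub, taylor_coeff_pred u m (by omega) hudeg.le, hucoeff]
      ring
    have hDdegle : ∀ (w : Polynomial ℂ) (c : ℂ), w.natDegree = m →
        (Polynomial.taylor c w - w).natDegree ≤ m - 1 := by
      intro w c hw
      rw [Polynomial.natDegree_le_iff_coeff_eq_zero]
      intro N hN
      rcases eq_or_lt_of_le (show m ≤ N by omega) with h | h
      · rw [Polynomial.coeff_sub, ← h, taylor_coeff_top w m hw.le, sub_self]
      · rw [Polynomial.coeff_sub,
          Polynomial.coeff_eq_zero_of_natDegree_lt (by rw [Polynomial.natDegree_taylor, hw]; exact h),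
          Polynomial.coeff_eq_zero_of_natDegree_lt (by rw [hw]; exact h), sub_self]
    have hmC : (m : ℂ) ≠ 0 := Nat.cast_ne_zero.mpr (by omega)
    have hDvdeg : Dv.natDegree = m - 1 := by
      refine le_antisymm (hDdegle v l₀ hvdeg) ?_
      apply Polynomial.le_natDegree_of_ne_zero
      rw [hDvcoeff]
      exact mul_ne_zero (mul_ne_zero hmC hl0) hAml
    have hDudeg : Du.natDegree = m - 1 := by
      refine le_antisymm (hDdegle u (-l₀) hudeg) ?_
      apply Polynomial.le_natDegree_of_ne_zero
      rw [hDucoeff]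
      exact mul_ne_zero (mul_ne_zero hmC (neg_ne_zero.mpr hl0)) hAl
    have hDvlead : Dv.leadingCoeff = m * l₀ * A.eval (-l₀) := by
      rw [Polynomial.leadingCoeff, hDvdeg, hDvcoeff]
    have hDulead : Du.leadingCoeff = m * (-l₀) * A.eval l₀ := by
      rw [Polynomial.leadingCoeff, hDudeg, hDucoeff]
    set W := u * Dv - v * Du with hW
    have hWcoeff : W.coeff (m + (m - 1))
        = 2 * m * l₀ * (A.eval l₀ * A.eval (-l₀)) := by
      have h1 := Polynomial.coeff_mul_degree_add_degree u Dv
      rw [hudeg, hDvdeg, hulead, hDvlead] at h1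
      have h2 := Polynomial.coeff_mul_degree_add_degree v Du
      rw [hvdeg, hDudeg, hvlead, hDulead] at h2
      rw [hW, Polynomial.coeff_sub, h1, h2]
      ring
    have hWeq : W = Polynomial.C (2 * l₀) * (Polynomial.X + Polynomial.C b) := by
      apply Polynomial.funext
      intro t
      have h := hvir 0 l₀ t
      rw [hstep1 t] at h
      simp only [zero_add, add_zero] at h
      rw [hW, hDv, hDu]
      simp only [Polynomial.eval_sub, Polynomial.eval_mul, Polynomial.taylor_eval,
        Polynomial.eval_add, Polynomial.eval_X, Polynomial.eval_C, hu_eval, hv_eval]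
      linear_combination h
    have hWc2 : W.coeff (m + (m - 1)) = 0 := by
      rw [hWeq]
      apply Polynomial.coeff_eq_zero_of_natDegree_lt
      have h1 : (Polynomial.C (2 * l₀) * (Polynomial.X + Polynomial.C b)).natDegree ≤ 1 := by
        refine le_trans (Polynomial.natDegree_mul_le) ?_
        rw [Polynomial.natDegree_C, Polynomial.natDegree_X_add_C]
      omega
    rw [hWcoeff] at hWc2
    exact (mul_ne_zero (mul_ne_zero (mul_ne_zero two_ne_zero hmC) hl0)
      (mul_ne_zero hAl hAml)) hWc2
  -- p is linear in x
  set A1 := p.coeff 1 with hA1def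
  set A0 := p.coeff 0 with hA0def
  have hrepr : p = Polynomial.C A1 * Polynomial.X + Polynomial.C A0 :=
    Polynomial.eq_X_add_C_of_natDegree_le_one hdeg
  have hlin : ∀ d x : ℂ, ev P d x = A1.eval d * x + A0.eval d := by
    intro d x
    rw [hev d x]
    conv_lhs => rw [hrepr]
    simp
  have hα0 : A1.eval 0 = 1 := by
    have h0 := hstep1 0
    have h1 := hstep1 1
    rw [hlin] at h0 h1
    linear_combination h1 - h0
  have hγ0 : A0.eval 0 = b := by
    have h0 := hstep1 0
    rw [hlin] at h0
    linear_combination h0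
  have hE1 : ∀ d l : ℂ, (d + 2 * l) * (A1.eval (-l) * A1.eval (d + l))
      = (d + 2 * l) * A1.eval d := by
    intro d l
    have h1 := hvir d l 1
    have h0 := hvir d l 0
    simp only [hlin] at h1 h0
    linear_combination h1 - h0
  have hαclean : ∀ l d : ℂ, A1.eval (-l) * A1.eval (d + l) = A1.eval d := by
    intro l d
    have hpoly : (Polynomial.X + Polynomial.C (2 * l)) *
        (Polynomial.C (A1.eval (-l)) * A1.comp (Polynomial.X + Polynomial.C l) - A1) = 0 := by
      apply eq_zero_of_eval
      intro z
      simp only [Polynomial.eval_mul, Polynomial.eval_sub, Polynomial.eval_add,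
        Polynomial.eval_X, Polynomial.eval_C, Polynomial.eval_comp]
      linear_combination hE1 z l
    rcases mul_eq_zero.mp hpoly with h | h
    · exact absurd h (Polynomial.X_add_C_ne_zero _)
    · have h2 := congrArg (Polynomial.eval d) h
      simp only [Polynomial.eval_sub, Polynomial.eval_mul, Polynomial.eval_C,
        Polynomial.eval_comp, Polynomial.eval_add, Polynomial.eval_X,
        Polynomial.eval_zero] at h2
      linear_combination h2
  have hαinv : ∀ l : ℂ, A1.eval (-l) * A1.eval l = 1 := by
    intro l
    have h := hαclean l 0
    rw [zero_add, hα0] at h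
    exact h
  have hA1const : ∀ z : ℂ, A1.eval z = 1 := by
    have hA1ne : A1 ≠ 0 := by
      intro h
      rw [h] at hα0
      simp at hα0
    have hcomp : A1.comp (Polynomial.C 2 * Polynomial.X) = A1 * A1 := by
      apply Polynomial.funext
      intro z
      simp only [Polynomial.eval_comp, Polynomial.eval_mul, Polynomial.eval_C,
        Polynomial.eval_X]
      have h1 := hαclean z z
      have h2 := hαinv z
      have h3 : A1.eval (2 * z) = A1.eval (z + z) := by rw [two_mul]
      rw [h3]
      linear_combination A1.eval z * h1 - A1.eval (z + z) * h2
    have hdegA1 : A1.natDegree = 0 := by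
      have h1 := Polynomial.natDegree_comp (p := A1) (q := Polynomial.C 2 * Polynomial.X)
      rw [hcomp, Polynomial.natDegree_mul hA1ne hA1ne,
        Polynomial.natDegree_C_mul_X (2 : ℂ) two_ne_zero, mul_one] at h1
      omega
    intro z
    have hC := Polynomial.eq_C_of_natDegree_le_zero hdegA1.le
    have h1 : A1.eval z = A1.coeff 0 := by rw [hC]; simp
    have h2 : A1.eval 0 = A1.coeff 0 := by rw [hC]; simp
    rw [h1, ← h2, hα0]
  have hE0 : ∀ d l : ℂ, (d + l) * A0.eval (d + l) + l * A0.eval (-l)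
      = (d + 2 * l) * A0.eval d := by
    intro d l
    have h0 := hvir d l 0
    simp only [hlin, hA1const] at h0
    linear_combination h0
  have hγsym : ∀ l : ℂ, A0.eval l + A0.eval (-l) = 2 * b := by
    intro l
    by_cases hl : l = 0
    · subst hl
      rw [neg_zero, hγ0]
      ring
    · have h := hE0 0 l
      simp only [zero_add] at h
      rw [hγ0] at h
      have h2 : l * (A0.eval l + A0.eval (-l)) = l * (2 * b) := by linear_combination h
      exact mul_left_cancel₀ hl h2
  have hE2 : ∀ d l : ℂ, (d + l) * (A0.eval (d + l) - b)
      = (d + 2 * l) * (A0.eval d - b) + l * (A0.eval l - b) := by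
    intro d l
    linear_combination (hE0 d l) - l * (hγsym l)
  have hswap : ∀ s r : ℂ, r * (A0.eval s - b) = s * (A0.eval r - b) := by
    intro s r
    have h1 := hE2 s r
    have h2 := hE2 r s
    rw [add_comm r s] at h2
    linear_combination (h2 - h1) / 2
  refine ⟨A0.eval 1 - b, b, ?_⟩
  intro d x
  have hd := hswap d 1
  rw [hlin d x, hA1const d]
  linear_combination hd
end

section
/- Let N ≥ 1, let A, B be N×N complex matrices with A² = A ≠ 0, and let a, b ∈ ℂ. Then both elements L₁(∂, x) = (a∂+b)·ABA + x·A and L₂(∂, x) = a·AB + x·A of 𝔤𝔠_N satisfy the Virasoro identity: for all complex d, l, t, Lᵢ(−l, t+d+l)·Lᵢ(d+l, t) − Lᵢ(d+l, t−l)·Lᵢ(−l, t) = (d+2l)·Lᵢ(d, t) (i = 1, 2). In particular, (a∂+b)J⁰_{ABA} + J¹_A and aJ⁰_{AB} + J¹_A are Virasoro elements of 𝔤𝔠_N. -/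
/-- The Virasoro identity for a matrix-valued polynomial element of 𝔤𝔠_N,
expressed via its evaluations at complex points. -/
def VirasoroIdentity {N : ℕ} (L : ℂ → ℂ → Matrix (Fin N) (Fin N) ℂ) : Prop :=
  ∀ d l t : ℂ,
    L (-l) (t + d + l) * L (d + l) t - L (d + l) (t - l) * L (-l) t
      = (d + 2 * l) • L d t

/-- (a∂+b)J⁰_{ABA} + J¹_A and aJ⁰_{AB} + J¹_A are Virasoro elements of 𝔤𝔠_N. -/
theorem stmt_2 (N : ℕ) (hN : 1 ≤ N) (A B : Matrix (Fin N) (Fin N) ℂ)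
    (hA : A * A = A) (hA0 : A ≠ 0) (a b : ℂ) :
    VirasoroIdentity (fun d x => (a * d + b) • (A * B * A) + x • A) ∧
      VirasoroIdentity (fun d x => a • (A * B) + x • A) := by
  have hCA : (A * B * A) * A = A * B * A := by rw [mul_assoc, hA]
  have hAC : A * (A * B * A) = A * B * A := by
    rw [← mul_assoc, ← mul_assoc, hA]
  have hAD : A * (A * B) = A * B := by rw [← mul_assoc, hA]
  constructor <;> intro d l t <;>
    simp only [add_mul, mul_add, smul_mul_assoc, mul_smul_comm, hA, hCA, hAC, hAD,
      smul_smul] <;>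
    module
end

section
/- Let N, k ≥ 2, let a₂, …, a_k ∈ ℂ, and let A, B₂, …, B_k be N×N complex matrices with A² = A ≠ 0 and A·Bᵢ·A = 0 for 2 ≤ i ≤ k. Then the element L(∂, x) = x·A + Σ_{i=2}^{k} aᵢ·x^i·(A·Bᵢ) of 𝔤𝔠_N satisfies the Virasoro identity: for all complex d, l, t, L(−l, t+d+l)·L(d+l, t) − L(d+l, t−l)·L(−l, t) = (d+2l)·L(d, t). In particular, J¹_A + Σ_{i=2}^{k} aᵢ J^i_{ABᵢ} is a Virasoro element of 𝔤𝔠_N. -/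
/-- J¹_A + Σ_{i=2}^{k} aᵢ J^i_{ABᵢ} is a Virasoro element of 𝔤𝔠_N. -/
theorem stmt_3 (N k : ℕ) (hN : 2 ≤ N) (hk : 2 ≤ k) (a : ℕ → ℂ)
    (A : Matrix (Fin N) (Fin N) ℂ) (B : ℕ → Matrix (Fin N) (Fin N) ℂ)
    (hA : A * A = A) (hA0 : A ≠ 0)
    (hB : ∀ i ∈ Finset.Icc 2 k, A * B i * A = 0) :
    VirasoroIdentity
      (fun _ x => x • A + ∑ i ∈ Finset.Icc 2 k, (a i * x ^ i) • (A * B i)) := by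
  intro d l t
  simp only []
  set S : ℂ → Matrix (Fin N) (Fin N) ℂ :=
    fun x => ∑ i ∈ Finset.Icc 2 k, (a i * x ^ i) • (A * B i) with hS
  have h1 : ∀ x y : ℂ, (x • A) * (y • A) = (x * y) • A := by
    intro x y; rw [smul_mul_smul_comm, hA]
  have h2 : ∀ x y : ℂ, (x • A) * S y = x • S y := by
    intro x y
    rw [hS]
    simp only [Finset.mul_sum, Finset.smul_sum]
    refine Finset.sum_congr rfl fun i hi => ?_
    rw [mul_smul_comm, smul_mul_assoc, ← mul_assoc, hA, smul_comm]
  have h3 : ∀ x y : ℂ, S x * (y • A) = 0 := by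
    intro x y
    rw [hS]
    rw [Finset.sum_mul]
    refine Finset.sum_eq_zero fun i hi => ?_
    rw [smul_mul_assoc, mul_smul_comm, hB i hi, smul_zero, smul_zero]
  have h4 : ∀ x y : ℂ, S x * S y = 0 := by
    intro x y
    rw [hS]
    rw [Finset.sum_mul]
    refine Finset.sum_eq_zero fun i hi => ?_
    rw [smul_mul_assoc, Finset.mul_sum]
    have : ∀ j ∈ Finset.Icc 2 k, (A * B i) * ((a j * y ^ j) • (A * B j)) = 0 := by
      intro j hj
      rw [mul_smul_comm, ← mul_assoc, hB i hi, zero_mul, smul_zero]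
    rw [Finset.sum_eq_zero this, smul_zero]
  have key : ∀ x y : ℂ,
      ((x • A + S x) * (y • A + S y)) = (x * y) • A + x • S y := by
    intro x y
    rw [add_mul, mul_add, mul_add, h1, h2, h3, h4]
    simp
  rw [key, key]
  have : (d + 2 * l) • (t • A + S t) = ((d + 2 * l) * t) • A + (d + 2 * l) • S t := by
    rw [smul_add, smul_smul]
  rw [this]
  have e1 : (t + d + l) * t - (t - l) * t = (d + 2 * l) * t := by ring
  have e2 : (t + d + l) • S t - (t - l) • S t = (d + 2 * l) • S t := by
    rw [← sub_smul]; ring_nf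
  rw [add_sub_add_comm, ← sub_smul, e1, e2]
end

section
/- Let N, k ≥ 2, let a₂, …, a_k ∈ ℂ, and let A₁, …, A_k, B₁, …, B_k be N×N complex matrices such that Aᵢ² = Aᵢ ≠ 0 for all i, AᵢBᵢAᵢ ≠ 0 for all i, and AᵢAⱼ = AⱼAᵢ = 0 for all i ≠ j. Then the element T₁(∂, x) = x·(Σ_{i=1}^{k} Aᵢ) + A₁B₁A₁ + Σ_{i=2}^{k} (∂ + aᵢ)·(AᵢBᵢAᵢ) of 𝔤𝔠_N satisfies the Virasoro identity: for all complex d, l, t, T₁(−l, t+d+l)·T₁(d+l, t) − T₁(d+l, t−l)·T₁(−l, t) = (d+2l)·T₁(d, t). -/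
private lemma aux_expand {n : ℕ} (S C : Matrix (Fin n) (Fin n) ℂ)
    (hSS : S * S = S) (hSC : S * C = C) (hCS : C * S = C)
    (x y : ℂ) (D1 D2 : Matrix (Fin n) (Fin n) ℂ)
    (h1 : S * D2 = D2) (h2 : D1 * S = D1) (h3 : C * D2 = 0) (h4 : D1 * C = 0) :
    (x • S + C + D1) * (y • S + C + D2)
      = (x * y) • S + x • C + y • C + x • D2 + y • D1 + C * C + D1 * D2 := by
  simp only [add_mul, mul_add, smul_mul_assoc, mul_smul_comm, hSS, hSC, hCS,
    h1, h2, h3, h4, smul_smul, smul_zero, add_zero, zero_add]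
  module

private lemma aux_vir {n : ℕ} (S C : Matrix (Fin n) (Fin n) ℂ)
    (D : ℂ → Matrix (Fin n) (Fin n) ℂ)
    (hSS : S * S = S) (hSC : S * C = C) (hCS : C * S = C)
    (hSD : ∀ e, S * D e = D e) (hDS : ∀ e, D e * S = D e)
    (hCD : ∀ e, C * D e = 0) (hDC : ∀ e, D e * C = 0)
    (hDD : ∀ e f, D e * D f = D f * D e)
    (hD3 : ∀ d l : ℂ, (d + l) • D (d + l) + l • D (-l) = (d + 2 * l) • D d)
    (d l t : ℂ) :
    ((t + d + l) • S + C + D (-l)) * (t • S + C + D (d + l))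
      - ((t - l) • S + C + D (d + l)) * (t • S + C + D (-l))
      = (d + 2 * l) • (t • S + C + D d) := by
  rw [aux_expand S C hSS hSC hCS _ _ _ _ (hSD _) (hDS _) (hCD _) (hDC _),
    aux_expand S C hSS hSC hCS _ _ _ _ (hSD _) (hDS _) (hCD _) (hDC _),
    hDD (-l) (d + l), smul_add, smul_add, ← hD3 d l]
  module

/-- T₁ is a (non-standard) Virasoro element of 𝔤𝔠_N of degree one. -/
theorem stmt_4 (N k : ℕ) (hN : 2 ≤ N) (hk : 2 ≤ k) (a : ℕ → ℂ)
    (A B : ℕ → Matrix (Fin N) (Fin N) ℂ)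
    (hidem : ∀ i ∈ Finset.Icc 1 k, A i * A i = A i)
    (hA0 : ∀ i ∈ Finset.Icc 1 k, A i ≠ 0)
    (hABA : ∀ i ∈ Finset.Icc 1 k, A i * B i * A i ≠ 0)
    (horth : ∀ i ∈ Finset.Icc 1 k, ∀ j ∈ Finset.Icc 1 k, i ≠ j →
      A i * A j = 0 ∧ A j * A i = 0) :
    VirasoroIdentity
      (fun d x => x • (∑ i ∈ Finset.Icc 1 k, A i) + A 1 * B 1 * A 1
        + ∑ i ∈ Finset.Icc 2 k, (d + a i) • (A i * B i * A i)) := by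
  set S : Matrix (Fin N) (Fin N) ℂ := ∑ i ∈ Finset.Icc 1 k, A i with hSdef
  set C : Matrix (Fin N) (Fin N) ℂ := A 1 * B 1 * A 1 with hCdef
  set D : ℂ → Matrix (Fin N) (Fin N) ℂ :=
    fun e => ∑ i ∈ Finset.Icc 2 k, (e + a i) • (A i * B i * A i) with hDdef
  have h1k : (1 : ℕ) ∈ Finset.Icc 1 k := by
    rw [Finset.mem_Icc]; omega
  have hsub : ∀ i ∈ Finset.Icc 2 k, i ∈ Finset.Icc 1 k := by
    intro i hi; rw [Finset.mem_Icc] at *; omega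
  have hne1 : ∀ i ∈ Finset.Icc 2 k, i ≠ 1 := by
    intro i hi; rw [Finset.mem_Icc] at hi; omega
  -- S absorbs each A i
  have hSA : ∀ i ∈ Finset.Icc 1 k, S * A i = A i := by
    intro i hi
    rw [hSdef, Finset.sum_mul, Finset.sum_eq_single i]
    · exact hidem i hi
    · intro j hj hji; exact (horth j hj i hi hji).1
    · intro h; exact absurd hi h
  have hAS : ∀ i ∈ Finset.Icc 1 k, A i * S = A i := by
    intro i hi
    rw [hSdef, Finset.mul_sum, Finset.sum_eq_single i]
    · exact hidem i hi
    · intro j hj hji; exact (horth i hi j hj (Ne.symm hji)).1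
    · intro h; exact absurd hi h
  have hSCi : ∀ i ∈ Finset.Icc 1 k, S * (A i * B i * A i) = A i * B i * A i := by
    intro i hi
    rw [mul_assoc (A i) (B i) (A i), ← mul_assoc S, hSA i hi]
  have hCiS : ∀ i ∈ Finset.Icc 1 k, (A i * B i * A i) * S = A i * B i * A i := by
    intro i hi
    rw [mul_assoc (A i * B i) (A i) S, hAS i hi]
  have hCiCj : ∀ i ∈ Finset.Icc 1 k, ∀ j ∈ Finset.Icc 1 k, i ≠ j →
      (A i * B i * A i) * (A j * B j * A j) = 0 := by
    intro i hi j hj hij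
    have h0 : A i * A j = 0 := (horth i hi j hj hij).1
    simp only [mul_assoc]
    rw [← mul_assoc (A i) (A j), h0, zero_mul, mul_zero, mul_zero]
  have hSS : S * S = S := by
    conv_lhs => rw [hSdef, Finset.sum_mul]
    rw [hSdef]
    exact Finset.sum_congr rfl hAS
  have hSC : S * C = C := hSCi 1 h1k
  have hCS : C * S = C := hCiS 1 h1k
  have hSD : ∀ e, S * D e = D e := by
    intro e
    rw [hDdef]
    simp only [Finset.mul_sum, mul_smul_comm]
    exact Finset.sum_congr rfl fun i hi => by rw [hSCi i (hsub i hi)]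
  have hDS : ∀ e, D e * S = D e := by
    intro e
    rw [hDdef]
    simp only [Finset.sum_mul, smul_mul_assoc]
    exact Finset.sum_congr rfl fun i hi => by rw [hCiS i (hsub i hi)]
  have hCD : ∀ e, C * D e = 0 := by
    intro e
    rw [hDdef]
    simp only [Finset.mul_sum, mul_smul_comm]
    apply Finset.sum_eq_zero
    intro i hi
    rw [hCdef, hCiCj 1 h1k i (hsub i hi) (Ne.symm (hne1 i hi)), smul_zero]
  have hDC : ∀ e, D e * C = 0 := by
    intro e
    rw [hDdef]
    simp only [Finset.sum_mul, smul_mul_assoc]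
    apply Finset.sum_eq_zero
    intro i hi
    rw [hCdef, hCiCj i (hsub i hi) 1 h1k (hne1 i hi), smul_zero]
  have hDDf : ∀ e f : ℂ, D e * D f
      = ∑ i ∈ Finset.Icc 2 k,
          ((e + a i) * (f + a i)) • ((A i * B i * A i) * (A i * B i * A i)) := by
    intro e f
    rw [hDdef]
    simp only [Finset.sum_mul_sum, smul_mul_smul_comm]
    refine Finset.sum_congr rfl fun i hi => ?_
    rw [Finset.sum_eq_single i]
    · intro j hj hji
      rw [hCiCj i (hsub i hi) j (hsub j hj) (Ne.symm hji), smul_zero]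
    · intro h; exact absurd hi h
  have hDD : ∀ e f, D e * D f = D f * D e := by
    intro e f
    rw [hDDf, hDDf]
    exact Finset.sum_congr rfl fun i _ => by rw [mul_comm (e + a i)]
  have hD3 : ∀ d l : ℂ, (d + l) • D (d + l) + l • D (-l) = (d + 2 * l) • D d := by
    intro d l
    rw [hDdef]
    simp only [Finset.smul_sum, smul_smul, ← Finset.sum_add_distrib]
    refine Finset.sum_congr rfl fun i _ => ?_
    rw [← add_smul]
    congr 1
    ring
  intro d l t
  exact aux_vir S C D hSS hSC hCS hSD hDS hCD hDC hDD hD3 d l t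
end

section
/- Let N, k ≥ 2, let a₁, …, a_k ∈ ℂ, and let A₁, …, A_k, B₁, …, B_k be N×N complex matrices such that Aᵢ² = Aᵢ ≠ 0 for all i, AᵢBᵢAᵢ ≠ 0 for all i, and AᵢAⱼ = AⱼAᵢ = 0 for all i ≠ j. Then the element T₂(∂, x) = x·(Σ_{i=1}^{k} Aᵢ) + Σ_{i=1}^{k} (∂ + aᵢ)·(AᵢBᵢAᵢ) of 𝔤𝔠_N satisfies the Virasoro identity: for all complex d, l, t, T₂(−l, t+d+l)·T₂(d+l, t) − T₂(d+l, t−l)·T₂(−l, t) = (d+2l)·T₂(d, t). -/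
/-- T₂ is a (non-standard) Virasoro element of 𝔤𝔠_N of degree one. -/
theorem stmt_5 (N k : ℕ) (hN : 2 ≤ N) (hk : 2 ≤ k) (a : ℕ → ℂ)
    (A B : ℕ → Matrix (Fin N) (Fin N) ℂ)
    (hidem : ∀ i ∈ Finset.Icc 1 k, A i * A i = A i)
    (hA0 : ∀ i ∈ Finset.Icc 1 k, A i ≠ 0)
    (hABA : ∀ i ∈ Finset.Icc 1 k, A i * B i * A i ≠ 0)
    (horth : ∀ i ∈ Finset.Icc 1 k, ∀ j ∈ Finset.Icc 1 k, i ≠ j →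
      A i * A j = 0 ∧ A j * A i = 0) :
    VirasoroIdentity
      (fun d x => x • (∑ i ∈ Finset.Icc 1 k, A i)
        + ∑ i ∈ Finset.Icc 1 k, (d + a i) • (A i * B i * A i)) := by
  intro d l t
  simp only
  set I := Finset.Icc 1 k with hI
  set S := ∑ i ∈ I, A i with hS
  -- basic absorption lemmas
  have hSA : ∀ i ∈ I, S * A i = A i := by
    intro i hi
    rw [hS, Finset.sum_mul, Finset.sum_eq_single_of_mem i hi]
    · exact hidem i hi
    · intro j hj hji
      exact (horth j hj i hi hji).1
  have hAS : ∀ i ∈ I, A i * S = A i := by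
    intro i hi
    rw [hS, Finset.mul_sum, Finset.sum_eq_single_of_mem i hi]
    · exact hidem i hi
    · intro j hj hji
      exact (horth i hi j hj (Ne.symm hji)).1
  have hSS : S * S = S := by
    rw [hS, Finset.mul_sum]
    exact Finset.sum_congr rfl fun i hi => hSA i hi
  have hSC : ∀ i ∈ I, S * (A i * B i * A i) = A i * B i * A i := by
    intro i hi
    rw [← mul_assoc, ← mul_assoc, hSA i hi]
  have hCS : ∀ i ∈ I, (A i * B i * A i) * S = A i * B i * A i := by
    intro i hi
    rw [mul_assoc, hAS i hi]
  have hCC : ∀ i ∈ I, ∀ j ∈ I, i ≠ j →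
      (A i * B i * A i) * (A j * B j * A j) = 0 := by
    intro i hi j hj hij
    have h0 : A i * A j = 0 := (horth i hi j hj hij).1
    calc (A i * B i * A i) * (A j * B j * A j)
        = A i * B i * (A i * A j) * (B j * A j) := by noncomm_ring
      _ = 0 := by rw [h0, mul_zero, zero_mul]
  set T := ∑ i ∈ I, A i * B i * A i with hT
  set M₀ := ∑ i ∈ I, a i • (A i * B i * A i) with hM₀
  have hST : S * T = T := by
    rw [hT, Finset.mul_sum]
    exact Finset.sum_congr rfl fun i hi => hSC i hi
  have hTS : T * S = T := by
    rw [hT, Finset.sum_mul]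
    exact Finset.sum_congr rfl fun i hi => hCS i hi
  have hSM : S * M₀ = M₀ := by
    rw [hM₀, Finset.mul_sum]
    exact Finset.sum_congr rfl fun i hi => by rw [mul_smul_comm, hSC i hi]
  have hMS : M₀ * S = M₀ := by
    rw [hM₀, Finset.sum_mul]
    exact Finset.sum_congr rfl fun i hi => by rw [smul_mul_assoc, hCS i hi]
  have hTM1 : T * M₀ = ∑ i ∈ I, a i • ((A i * B i * A i) * (A i * B i * A i)) := by
    rw [hT, Finset.sum_mul]
    refine Finset.sum_congr rfl fun i hi => ?_
    rw [hM₀, Finset.mul_sum, Finset.sum_eq_single_of_mem i hi]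
    · rw [mul_smul_comm]
    · intro j hj hji
      rw [mul_smul_comm, hCC i hi j hj (Ne.symm hji), smul_zero]
  have hTM2 : M₀ * T = ∑ i ∈ I, a i • ((A i * B i * A i) * (A i * B i * A i)) := by
    rw [hT, Finset.mul_sum]
    refine Finset.sum_congr rfl fun j hj => ?_
    rw [hM₀, Finset.sum_mul, Finset.sum_eq_single_of_mem j hj]
    · rw [smul_mul_assoc]
    · intro i hi hij
      rw [smul_mul_assoc, hCC i hi j hj hij, smul_zero]
  have hTM : T * M₀ = M₀ * T := by rw [hTM1, hTM2]
  have hMsplit : ∀ x : ℂ, ∑ i ∈ I, (x + a i) • (A i * B i * A i) = x • T + M₀ := by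
    intro x
    rw [hT, hM₀, Finset.smul_sum, ← Finset.sum_add_distrib]
    exact Finset.sum_congr rfl fun i hi => by rw [add_smul]
  rw [hMsplit, hMsplit, hMsplit]
  simp only [mul_add, add_mul, smul_mul_assoc, mul_smul_comm, hSS, hST, hTS, hSM, hMS, hTM,
    smul_smul]
  module
end

section
/- Let n₁, n₂ be positive integers and let Φ : M_{n₁}(ℂ) → M_{n₂}(ℂ) be a unital ℂ-algebra homomorphism between the full matrix algebras. Then there exists a positive integer m with n₂ = m·n₁ such that, after identifying the index set of size n₂ with (Fin m) × (Fin n₁) via some bijection, there is an invertible matrix P ∈ M_{n₂}(ℂ) with Φ(A) = P · (I_m ⊗ A) · P⁻¹ for all A ∈ M_{n₁}(ℂ), where I_m ⊗ A denotes the Kronecker product of the m×m identity matrix with A. -/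
open Kronecker

private lemma sum_mulVec_aux {ι : Type*} {n : ℕ} (s : Finset ι)
    (M : ι → Matrix (Fin n) (Fin n) ℂ) (x : Fin n → ℂ) :
    (∑ i ∈ s, M i).mulVec x = ∑ i ∈ s, (M i).mulVec x := by
  rw [← Matrix.toLin'_apply, map_sum, LinearMap.sum_apply]
  simp [Matrix.toLin'_apply]

/-- Rigidity of unital algebra homomorphisms between complex matrix algebras
(a consequence of the Skolem–Noether theorem). -/
theorem stmt_8 (n₁ n₂ : ℕ) (hn₁ : 0 < n₁) (hn₂ : 0 < n₂)
    (Φ : Matrix (Fin n₁) (Fin n₁) ℂ →ₐ[ℂ] Matrix (Fin n₂) (Fin n₂) ℂ) :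
    ∃ m : ℕ, 0 < m ∧ n₂ = m * n₁ ∧
      ∃ (e : Fin n₂ ≃ Fin m × Fin n₁) (P : Matrix (Fin n₂) (Fin n₂) ℂ),
        IsUnit P ∧
          ∀ A : Matrix (Fin n₁) (Fin n₁) ℂ,
            Φ A = P * (Matrix.reindex e.symm e.symm
              ((1 : Matrix (Fin m) (Fin m) ℂ) ⊗ₖ A)) * P⁻¹ := by
  classical
  let E : Fin n₁ → Fin n₁ → Matrix (Fin n₁) (Fin n₁) ℂ :=
    fun i j => Matrix.single i j 1
  let f : Fin n₁ → Fin n₁ → (Fin n₂ → ℂ) →ₗ[ℂ] (Fin n₂ → ℂ) :=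
    fun i j => (Φ (E i j)).mulVecLin
  let z : Fin n₁ := ⟨0, hn₁⟩
  have hEmul : ∀ i j k l : Fin n₁, E i j * E k l = if j = k then E i l else 0 := by
    intro i j k l
    split_ifs with h
    · subst h
      show Matrix.single i j 1 * Matrix.single j l 1 = _
      rw [Matrix.single_mul_single_same, mul_one]
    · exact Matrix.single_mul_single_of_ne (c := (1:ℂ)) i j k h 1
  have hff : ∀ (i j k l : Fin n₁) (x : Fin n₂ → ℂ),
      f i j (f k l x) = if j = k then f i l x else 0 := by
    intro i j k l x
    show (Φ (E i j)).mulVec ((Φ (E k l)).mulVec x) = _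
    rw [Matrix.mulVec_mulVec, ← map_mul, hEmul]
    split_ifs with h
    · rfl
    · simp
  have hEsum : ∑ i, E i i = (1 : Matrix (Fin n₁) (Fin n₁) ℂ) := by
    ext a b
    simp [E, Matrix.single, Matrix.one_apply, ite_and, Matrix.sum_apply]
  have hid : ∀ x : Fin n₂ → ℂ, ∑ i, f i i x = x := by
    intro x
    have h2 : ∑ i, f i i x = (∑ i, Φ (E i i)).mulVec x := by
      rw [sum_mulVec_aux]
      rfl
    rw [h2, ← map_sum, hEsum, map_one, Matrix.one_mulVec]
  set S := LinearMap.range (f z z) with hS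
  set m := Module.finrank ℂ S with hm
  let v : Module.Basis (Fin m) ℂ S := Module.finBasis ℂ S
  have hvfix : ∀ p : Fin m, f z z ((v p : Fin n₂ → ℂ)) = (v p : Fin n₂ → ℂ) := by
    intro p
    obtain ⟨y, hy⟩ := (v p).2
    rw [← hy]
    have := hff z z z z y
    simpa using this
  let w : Fin m × Fin n₁ → (Fin n₂ → ℂ) := fun pk => f pk.2 z (v pk.1)
  have hfw : ∀ (i j : Fin n₁) (p : Fin m) (k : Fin n₁),
      f i j (w (p, k)) = if j = k then w (p, i) else 0 := by
    intro i j p k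
    show f i j (f k z (v p)) = _
    rw [hff]
  have hwz : ∀ p : Fin m, w (p, z) = (v p : Fin n₂ → ℂ) := fun p => hvfix p
  have vind : LinearIndependent ℂ (fun p : Fin m => (v p : Fin n₂ → ℂ)) := by
    have := v.linearIndependent.map' S.subtype (Submodule.ker_subtype S)
    exact this
  have hli : LinearIndependent ℂ w := by
    rw [Fintype.linearIndependent_iff]
    intro g hg pk
    have key : ∀ j : Fin n₁, ∑ p : Fin m, g (p, j) • (v p : Fin n₂ → ℂ) = 0 := by
      intro j
      have h1 : f z j (∑ pi : Fin m × Fin n₁, g pi • w pi) = 0 := by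
        rw [hg, map_zero]
      rw [map_sum] at h1
      have h2 : ∀ pi : Fin m × Fin n₁,
          f z j (g pi • w pi) = if j = pi.2 then g pi • (v pi.1 : Fin n₂ → ℂ) else 0 := by
        intro pi
        rw [map_smul]
        rcases pi with ⟨p, k⟩
        rw [hfw z j p k]
        split_ifs with h
        · rw [hwz]
        · simp
      rw [Finset.sum_congr rfl (fun pi _ => h2 pi)] at h1
      rw [Fintype.sum_prod_type] at h1
      have h3 : ∀ p : Fin m,
          (∑ k : Fin n₁, if j = k then g (p, k) • (v p : Fin n₂ → ℂ) else 0)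
            = g (p, j) • (v p : Fin n₂ → ℂ) := by
        intro p
        rw [Finset.sum_ite_eq (Finset.univ : Finset (Fin n₁)) j
          (fun k => g (p, k) • (v p : Fin n₂ → ℂ))]
        simp
      rw [Finset.sum_congr rfl (fun p _ => h3 p)] at h1
      exact h1
    have := Fintype.linearIndependent_iff.mp vind (fun p => g (p, pk.2)) (key pk.2) pk.1
    simpa using this
  have hspan : ∀ x : Fin n₂ → ℂ, x ∈ Submodule.span ℂ (Set.range w) := by
    intro x
    rw [← hid x]
    apply Submodule.sum_mem
    intro i _
    have hmem : f z i x ∈ S := by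
      rw [hS]
      exact ⟨f z i x, by simpa using hff z z z i x⟩
    set s : S := ⟨f z i x, hmem⟩ with hs
    have hrepr : (s : Fin n₂ → ℂ) = ∑ p : Fin m, (v.repr s p) • (v p : Fin n₂ → ℂ) := by
      conv_lhs => rw [← v.sum_repr s]
      push_cast
      rfl
    have hfi : f i i x = f i z (f z i x) := by
      rw [hff]; simp
    rw [hfi]
    have : f z i x = (s : Fin n₂ → ℂ) := rfl
    rw [this, hrepr, map_sum]
    apply Submodule.sum_mem
    intro p _
    rw [map_smul]
    exact Submodule.smul_mem _ _ (Submodule.subset_span ⟨(p, i), rfl⟩)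
  let b : Module.Basis (Fin m × Fin n₁) ℂ (Fin n₂ → ℂ) :=
    Module.Basis.mk hli (fun x _ => hspan x)
  have hcard : n₂ = m * n₁ := by
    have h1 : Module.finrank ℂ (Fin n₂ → ℂ) = n₂ := Module.finrank_fin_fun ℂ
    have h2 := Module.finrank_eq_card_basis b
    rw [h1] at h2
    simpa [Fintype.card_prod] using h2
  have hmpos : 0 < m := by
    rcases Nat.eq_zero_or_pos m with h | h
    · rw [h, zero_mul] at hcard; omega
    · exact h
  refine ⟨m, hmpos, hcard, ?_⟩
  let e : Fin n₂ ≃ Fin m × Fin n₁ := (finCongr hcard).trans finProdFinEquiv.symm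
  let Pb : Module.Basis (Fin n₂) ℂ (Fin n₂ → ℂ) := b.reindex e.symm
  have hPb : ∀ j : Fin n₂, Pb j = w (e j) := by
    intro j
    show b.reindex e.symm j = w (e j)
    rw [Module.Basis.reindex_apply, Equiv.symm_symm]
    exact congrFun (Module.Basis.coe_mk hli _) (e j)
  let P : Matrix (Fin n₂) (Fin n₂) ℂ := (Pi.basisFun ℂ (Fin n₂)).toMatrix ⇑Pb
  have hPinv : Invertible P := (Pi.basisFun ℂ (Fin n₂)).invertibleToMatrix Pb
  have hP : IsUnit P := isUnit_of_invertible P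
  have hPentry : ∀ (x j : Fin n₂), P x j = w (e j) x := by
    intro x j
    show (Pi.basisFun ℂ (Fin n₂)).toMatrix ⇑Pb x j = w (e j) x
    rw [Module.Basis.toMatrix_apply, hPb, Pi.basisFun_repr]
  refine ⟨e, P, hP, ?_⟩
  intro A
  -- the key computation: Φ A * P = P * (reindexed Kronecker product)
  have hAw : ∀ (p : Fin m) (k : Fin n₁),
      (Φ A).mulVec (w (p, k)) = ∑ i : Fin n₁, A i k • w (p, i) := by
    intro p k
    have hA : A = ∑ i : Fin n₁, ∑ j : Fin n₁, A i j • E i j := by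
      conv_lhs => rw [Matrix.matrix_eq_sum_single A]
      refine Finset.sum_congr rfl fun i _ => Finset.sum_congr rfl fun j _ => ?_
      rw [Matrix.smul_single, smul_eq_mul, mul_one]
    have hΦA : Φ A = ∑ i : Fin n₁, ∑ j : Fin n₁, A i j • Φ (E i j) := by
      conv_lhs => rw [hA]
      rw [map_sum]
      refine Finset.sum_congr rfl fun i _ => ?_
      rw [map_sum]
      exact Finset.sum_congr rfl fun j _ => by rw [map_smul]
    calc (Φ A).mulVec (w (p, k))
        = ∑ i : Fin n₁, ∑ j : Fin n₁, A i j • (Φ (E i j)).mulVec (w (p, k)) := by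
          rw [hΦA, sum_mulVec_aux]
          refine Finset.sum_congr rfl fun i _ => ?_
          rw [sum_mulVec_aux]
          exact Finset.sum_congr rfl fun j _ => by rw [Matrix.smul_mulVec]
      _ = ∑ i : Fin n₁, A i k • w (p, i) := by
          refine Finset.sum_congr rfl fun i _ => ?_
          have h4 : ∀ j : Fin n₁, A i j • (Φ (E i j)).mulVec (w (p, k))
              = if j = k then A i j • w (p, i) else 0 := by
            intro j
            have h5 : (Φ (E i j)).mulVec (w (p, k)) = f i j (w (p, k)) := rfl
            rw [h5, hfw i j p k]
            split_ifs with h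
            · rfl
            · simp
          rw [Finset.sum_congr rfl (fun j _ => h4 j)]
          rw [Finset.sum_ite_eq' (Finset.univ : Finset (Fin n₁)) k
            (fun j => A i j • w (p, i))]
          simp
  have key : Φ A * P = P * (Matrix.reindex e.symm e.symm
      ((1 : Matrix (Fin m) (Fin m) ℂ) ⊗ₖ A)) := by
    ext x j
    have lhs : (Φ A * P) x j = ∑ i : Fin n₁, A i (e j).2 * w ((e j).1, i) x := by
      rw [Matrix.mul_apply]
      have h6 : ∀ k : Fin n₂, (Φ A) x k * P k j = (Φ A) x k * w (e j) k := by
        intro k; rw [hPentry]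
      rw [Finset.sum_congr rfl (fun k _ => h6 k)]
      have h7 : ∑ k : Fin n₂, (Φ A) x k * w (e j) k = ((Φ A).mulVec (w (e j))) x := rfl
      rw [h7]
      have heq : w (e j) = w ((e j).1, (e j).2) := by rfl
      rw [heq, hAw (e j).1 (e j).2]
      simp [Finset.sum_apply, Pi.smul_apply, smul_eq_mul]
    have rhs : (P * (Matrix.reindex e.symm e.symm
        ((1 : Matrix (Fin m) (Fin m) ℂ) ⊗ₖ A))) x j
        = ∑ i : Fin n₁, A i (e j).2 * w ((e j).1, i) x := by
      rw [Matrix.mul_apply]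
      set G : Fin m × Fin n₁ → ℂ := fun pi =>
        w pi x * (((1 : Matrix (Fin m) (Fin m) ℂ) pi.1 (e j).1) * A pi.2 (e j).2) with hG
      have h1 : ∀ k : Fin n₂, P x k * (Matrix.reindex e.symm e.symm
          ((1 : Matrix (Fin m) (Fin m) ℂ) ⊗ₖ A)) k j = G (e k) := by
        intro k
        rw [hPentry, Matrix.reindex_apply, Matrix.submatrix_apply, Equiv.symm_symm,
          Matrix.kroneckerMap_apply]
      rw [Finset.sum_congr rfl (fun k _ => h1 k)]
      rw [Equiv.sum_comp e G]
      rw [hG, Fintype.sum_prod_type]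
      have h8 : ∀ q : Fin m, ∀ i : Fin n₁,
          w (q, i) x * (((1 : Matrix (Fin m) (Fin m) ℂ) q (e j).1) * A i (e j).2)
          = if q = (e j).1 then A i (e j).2 * w ((e j).1, i) x else 0 := by
        intro q i
        rw [Matrix.one_apply]
        split_ifs with h
        · subst h; ring
        · ring
      rw [Finset.sum_congr rfl (fun q _ =>
        Finset.sum_congr rfl (fun i _ => h8 q i))]
      rw [Finset.sum_comm]
      refine Finset.sum_congr rfl fun i _ => ?_
      rw [Finset.sum_ite_eq' (Finset.univ : Finset (Fin m)) (e j).1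
        (fun _ => A i (e j).2 * w ((e j).1, i) x)]
      simp
    rw [lhs, rhs]
  have hPP : P * P⁻¹ = 1 :=
    Matrix.mul_nonsing_inv P ((Matrix.isUnit_iff_isUnit_det P).mp hP)
  calc Φ A = Φ A * (P * P⁻¹) := by rw [hPP, mul_one]
    _ = (Φ A * P) * P⁻¹ := by rw [mul_assoc]
    _ = P * (Matrix.reindex e.symm e.symm
        ((1 : Matrix (Fin m) (Fin m) ℂ) ⊗ₖ A)) * P⁻¹ := by rw [key]
end

section
/- Let n₁, n₂ be positive integers and let Φ : M_{n₁}(ℂ) → M_{n₂}(ℂ) be a ℂ-linear map with Φ(1) = 1 and Φ(AB) = Φ(B)·Φ(A) for all A, B ∈ M_{n₁}(ℂ) (a unital ℂ-algebra anti-homomorphism). Then there exists a positive integer m with n₂ = m·n₁ such that, after identifying the index set of size n₂ with (Fin m) × (Fin n₁) via some bijection, there is an invertible matrix P ∈ M_{n₂}(ℂ) with Φ(A) = P · (I_m ⊗ Aᵀ) · P⁻¹ for all A ∈ M_{n₁}(ℂ), where Aᵀ is the transpose of A and I_m ⊗ Aᵀ denotes the Kronecker product of the m×m identity matrix with Aᵀ.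 -/
open Kronecker Matrix

private theorem stmt9_sum_mulVec {ι n' : Type*} [Fintype n'] (s : Finset ι)
    (f : ι → Matrix n' n' ℂ) (x : n' → ℂ) :
    (∑ i ∈ s, f i) *ᵥ x = ∑ i ∈ s, f i *ᵥ x := by
  ext k
  simp only [Matrix.mulVec, dotProduct, Matrix.sum_apply, Finset.sum_apply, Finset.sum_mul]
  rw [Finset.sum_comm]

/-- Rigidity of unital algebra anti-homomorphisms between complex matrix algebras. -/
theorem stmt_9 (n₁ n₂ : ℕ) (hn₁ : 0 < n₁) (hn₂ : 0 < n₂)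
    (Φ : Matrix (Fin n₁) (Fin n₁) ℂ →ₗ[ℂ] Matrix (Fin n₂) (Fin n₂) ℂ)
    (hone : Φ 1 = 1)
    (hanti : ∀ A B : Matrix (Fin n₁) (Fin n₁) ℂ, Φ (A * B) = Φ B * Φ A) :
    ∃ m : ℕ, 0 < m ∧ n₂ = m * n₁ ∧
      ∃ (e : Fin n₂ ≃ Fin m × Fin n₁) (P : Matrix (Fin n₂) (Fin n₂) ℂ),
        IsUnit P ∧
          ∀ A : Matrix (Fin n₁) (Fin n₁) ℂ,
            Φ A = P * (Matrix.reindex e.symm e.symm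
              ((1 : Matrix (Fin m) (Fin m) ℂ) ⊗ₖ Aᵀ)) * P⁻¹ := by
  classical
  set z : Fin n₁ := ⟨0, hn₁⟩ with hz
  set G : Fin n₁ → Fin n₁ → Matrix (Fin n₂) (Fin n₂) ℂ :=
    fun i j => Φ (Matrix.single j i 1) with hGdef
  have hGmul : ∀ i j k l, G i j * G k l = if j = k then G i l else 0 := by
    intro i j k l
    simp only [hGdef, ← hanti]
    by_cases h : j = k
    · subst h
      rw [Matrix.single_mul_single_same, mul_one, if_pos rfl]
    · rw [Matrix.single_mul_single_of_ne (h := Ne.symm h), map_zero, if_neg h]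
  have hGsum : ∑ i, G i i = 1 := by
    have h1 : (∑ i, Matrix.single i i (1 : ℂ) : Matrix (Fin n₁) (Fin n₁) ℂ) = 1 := by
      ext a b
      simp only [Matrix.sum_apply, Matrix.single, of_apply, one_apply]
      by_cases h : a = b
      · subst h
        rw [Finset.sum_eq_single a (fun x _ hx => if_neg (fun hc => hx hc.1))
          (fun hh => absurd (Finset.mem_univ a) hh), if_pos ⟨rfl, rfl⟩, if_pos rfl]
      · rw [if_neg h, Finset.sum_eq_zero fun x _ => if_neg fun hc => h (hc.1.symm.trans hc.2)]
    rw [hGdef, ← map_sum, h1, hone]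
  set V : Submodule ℂ (Fin n₂ → ℂ) := LinearMap.range (Matrix.mulVecLin (G z z)) with hV
  have hfix : ∀ y : V, G z z *ᵥ (y : Fin n₂ → ℂ) = (y : Fin n₂ → ℂ) := by
    rintro ⟨y, x, rfl⟩
    simp only [Matrix.mulVecLin_apply, Matrix.mulVec_mulVec]
    rw [hGmul, if_pos rfl]
  set m : ℕ := Module.finrank ℂ V with hm
  set v : Module.Basis (Fin m) ℂ V := Module.finBasis ℂ V with hv
  set w : Fin m × Fin n₁ → (Fin n₂ → ℂ) :=
    fun pi => G pi.2 z *ᵥ (v pi.1 : Fin n₂ → ℂ) with hw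
  have hGw : ∀ i j (q : Fin m × Fin n₁),
      G i j *ᵥ w q = if j = q.2 then w (q.1, i) else 0 := by
    intro i j q
    rw [hw]
    simp only [Matrix.mulVec_mulVec]
    rw [hGmul]
    split
    · rfl
    · rw [Matrix.zero_mulVec]
  have hΦdecomp : ∀ A : Matrix (Fin n₁) (Fin n₁) ℂ,
      Φ A = ∑ i, ∑ i', A i i' • G i' i := by
    intro A
    conv_lhs => rw [matrix_eq_sum_single A]
    rw [map_sum]
    refine Finset.sum_congr rfl fun i _ => ?_
    rw [map_sum]
    refine Finset.sum_congr rfl fun i' _ => ?_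
    rw [← _root_.map_smul]
    congr 1
    rw [smul_single, smul_eq_mul, mul_one]
  have hΦw : ∀ (A : Matrix (Fin n₁) (Fin n₁) ℂ) (p : Fin m) (j : Fin n₁),
      Φ A *ᵥ w (p, j) = ∑ i, A j i • w (p, i) := by
    intro A p j
    rw [hΦdecomp A, stmt9_sum_mulVec]
    have hstep : ∀ i : Fin n₁, (∑ i', A i i' • G i' i) *ᵥ w (p, j)
        = ∑ i', A i i' • (G i' i *ᵥ w (p, j)) := by
      intro i
      rw [stmt9_sum_mulVec]
      exact Finset.sum_congr rfl fun i' _ => Matrix.smul_mulVec _ _ _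
    simp only [hstep]
    have heach : ∀ i i' : Fin n₁, A i i' • (G i' i *ᵥ w (p, j))
        = if i = j then A i i' • w (p, i') else 0 := by
      intro i i'
      rw [hGw]
      simp only [smul_ite, smul_zero]
    simp only [heach]
    rw [Finset.sum_comm]
    refine Finset.sum_congr rfl fun i' _ => ?_
    rw [Finset.sum_ite_eq' Finset.univ j (fun i => A i i' • w (p, i'))]
    simp
  -- linear independence of w
  have hvli : LinearIndependent ℂ (fun p => (v p : Fin n₂ → ℂ)) :=
    v.linearIndependent.map' V.subtype V.ker_subtype
  have hwli : LinearIndependent ℂ w := by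
    rw [Fintype.linearIndependent_iff]
    intro c hc ⟨p, j⟩
    have h2 := congrArg (Matrix.mulVecLin (G z j)) hc
    rw [map_sum, map_zero] at h2
    simp only [_root_.map_smul, Matrix.mulVecLin_apply, hGw] at h2
    rw [Fintype.sum_prod_type] at h2
    have h3 : ∀ q : Fin m, (∑ i, c (q, i) • if j = i then w (q, z) else 0)
        = c (q, j) • w (q, z) := by
      intro q
      rw [Finset.sum_congr rfl (fun i _ => by rw [smul_ite, smul_zero]),
        Finset.sum_ite_eq Finset.univ j (fun i => c (q, i) • w (q, z))]
      simp
    simp only [h3] at h2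
    have h4 : ∀ q : Fin m, w (q, z) = (v q : Fin n₂ → ℂ) := fun q => hfix (v q)
    simp only [h4] at h2
    exact Fintype.linearIndependent_iff.mp hvli (fun q => c (q, j)) h2 p
  -- spanning
  have hwspan : ⊤ ≤ Submodule.span ℂ (Set.range w) := by
    intro x _
    have hyV : ∀ i : Fin n₁, G z i *ᵥ x ∈ V := by
      intro i
      refine ⟨G z i *ᵥ x, ?_⟩
      simp only [Matrix.mulVecLin_apply, Matrix.mulVec_mulVec]
      rw [hGmul, if_pos rfl]
    have h0 : x = ∑ i, G i i *ᵥ x := by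
      conv_lhs => rw [← Matrix.one_mulVec x, ← hGsum]
      rw [stmt9_sum_mulVec]
    have hmem : ∀ i : Fin n₁, G i i *ᵥ x ∈ Submodule.span ℂ (Set.range w) := by
      intro i
      set y : V := ⟨G z i *ᵥ x, hyV i⟩ with hy
      have h1 : G i i *ᵥ x = G i z *ᵥ (y : Fin n₂ → ℂ) := by
        show G i i *ᵥ x = G i z *ᵥ (G z i *ᵥ x)
        rw [Matrix.mulVec_mulVec, hGmul, if_pos rfl]
      have h2 : (y : Fin n₂ → ℂ) = ∑ p, v.repr y p • (v p : Fin n₂ → ℂ) := by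
        conv_lhs => rw [← v.sum_repr y]
        push_cast
        rfl
      have h3 : G i i *ᵥ x = ∑ p, v.repr y p • w (p, i) := by
        rw [h1, h2, ← Matrix.mulVecLin_apply, map_sum]
        refine Finset.sum_congr rfl fun p _ => ?_
        rw [_root_.map_smul, Matrix.mulVecLin_apply]
      rw [h3]
      exact Submodule.sum_mem _ fun p _ =>
        Submodule.smul_mem _ _ (Submodule.subset_span ⟨(p, i), rfl⟩)
    rw [h0]
    exact Submodule.sum_mem _ fun i _ => hmem i
  set b : Module.Basis (Fin m × Fin n₁) ℂ (Fin n₂ → ℂ) := Module.Basis.mk hwli hwspan with hb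
  have hcard : n₂ = m * n₁ := by
    have h := Module.finrank_eq_card_basis b
    simpa using h
  have hmpos : 0 < m := by
    rcases Nat.eq_zero_or_pos m with h | h
    · rw [h, zero_mul] at hcard; omega
    · exact h
  refine ⟨m, hmpos, hcard, ?_⟩
  have e : Fin n₂ ≃ Fin m × Fin n₁ := Fintype.equivOfCardEq (by simp [hcard])
  set b' : Module.Basis (Fin n₂) ℂ (Fin n₂ → ℂ) := b.reindex e.symm with hb'
  set P : Matrix (Fin n₂) (Fin n₂) ℂ := (Pi.basisFun ℂ (Fin n₂)).toMatrix ⇑b' with hP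
  have : Invertible P := Module.Basis.invertibleToMatrix (Pi.basisFun ℂ (Fin n₂)) b'
  have hPunit : IsUnit P := isUnit_of_invertible P
  have hPentry : ∀ k l, P k l = w (e l) k := by
    intro k l
    rw [hP, Module.Basis.toMatrix_apply, Pi.basisFun_repr, hb', Module.Basis.reindex_apply,
      Equiv.symm_symm, hb, Module.Basis.coe_mk]
  refine ⟨e, P, hPunit, fun A => ?_⟩
  have hmain : Φ A * P = P * (Matrix.reindex e.symm e.symm
      ((1 : Matrix (Fin m) (Fin m) ℂ) ⊗ₖ Aᵀ)) := by
    ext k l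
    rw [Matrix.mul_apply, Matrix.mul_apply]
    have hlhs : ∑ r, Φ A k r * P r l = (Φ A *ᵥ w (e l)) k := by
      rw [Matrix.mulVec]
      simp only [dotProduct, hPentry]
    rw [hlhs]
    have hwel : w (e l) = w ((e l).1, (e l).2) := by rfl
    rw [hwel, hΦw A (e l).1 (e l).2]
    have hlhs2 : (∑ i, A (e l).2 i • w ((e l).1, i)) k
        = ∑ i, A (e l).2 i * w ((e l).1, i) k := by
      rw [Finset.sum_apply]
      simp only [Pi.smul_apply, smul_eq_mul]
    rw [hlhs2]
    have hrhs : ∀ r, P k r * (Matrix.reindex e.symm e.symm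
        ((1 : Matrix (Fin m) (Fin m) ℂ) ⊗ₖ Aᵀ)) r l
        = w (e r) k * ((if (e r).1 = (e l).1 then 1 else 0) * A (e l).2 (e r).2) := by
      intro r
      rw [hPentry, Matrix.reindex_apply, Matrix.submatrix_apply,
        Matrix.kroneckerMap_apply, Matrix.transpose_apply, Matrix.one_apply, Equiv.symm_symm]
    simp only [hrhs]
    rw [Equiv.sum_comp e (fun qi => w qi k *
      ((if qi.1 = (e l).1 then 1 else 0) * A (e l).2 qi.2))]
    rw [Fintype.sum_prod_type]
    rw [Finset.sum_comm]
    refine Finset.sum_congr rfl fun i _ => ?_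
    rw [Finset.sum_congr rfl (fun q _ => by
      rw [show w (q, i) k * ((if q = (e l).1 then 1 else 0) * A (e l).2 i)
        = if q = (e l).1 then A (e l).2 i * w ((e l).1, i) k else 0 by
          by_cases hq : q = (e l).1
          · subst hq
            rw [if_pos rfl, if_pos rfl, one_mul, mul_comm]
          · rw [if_neg hq, if_neg hq, zero_mul, mul_zero]]),
      Finset.sum_ite_eq' Finset.univ (e l).1 (fun _ => A (e l).2 i * w ((e l).1, i) k)]
    simp
  have hdet : IsUnit P.det := (Matrix.isUnit_iff_isUnit_det P).mp hPunit
  calc Φ A = Φ A * (P * P⁻¹) := by rw [Matrix.mul_nonsing_inv P hdet, mul_one]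
    _ = (Φ A * P) * P⁻¹ := by rw [mul_assoc]
    _ = _ := by rw [hmain, mul_assoc]
end

section
/- Let f be a one-variable complex polynomial. Then y·f(−y) + (x+y)·f(x+y) = (x+2y)·f(x) holds for all complex numbers x and y if and only if there exist complex numbers a, b such that f(X) = a·X + b. -/
/-- The functional equation for the coefficient of J⁰ in a Virasoro element of 𝔤𝔠₁. -/
theorem stmt_12 (f : Polynomial ℂ) :
    (∀ x y : ℂ, y * f.eval (-y) + (x + y) * f.eval (x + y) = (x + 2 * y) * f.eval x) ↔
      ∃ a b : ℂ, f = Polynomial.C a * Polynomial.X + Polynomial.C b := by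
  constructor
  · intro h
    have hkey : ∀ s u : ℂ, s * f.eval s - u * f.eval u = (s - u) * f.eval (s + u) := by
      intro s u
      have := h (s + u) (-u)
      simp only [neg_neg] at this
      have h2 : s + u + -u = s := by ring
      have h3 : s + u + 2 * -u = s - u := by ring
      rw [h2, h3] at this
      linear_combination this
    refine ⟨f.eval 1 - f.eval 0, f.eval 0, ?_⟩
    apply Polynomial.funext
    intro x
    have h1 := hkey ((x + 1) / 2) ((1 - x) / 2)
    have h2 := hkey ((x + 1) / 2) ((x - 1) / 2)
    have h3 := hkey ((1 - x) / 2) ((x - 1) / 2)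
    have e1 : (x + 1) / 2 + (1 - x) / 2 = 1 := by ring
    have e2 : (x + 1) / 2 + (x - 1) / 2 = x := by ring
    have e3 : (1 - x) / 2 + (x - 1) / 2 = 0 := by ring
    rw [e1] at h1
    rw [e2] at h2
    rw [e3] at h3
    have e4 : (x + 1) / 2 - (1 - x) / 2 = x := by ring
    have e5 : (x + 1) / 2 - (x - 1) / 2 = 1 := by ring
    have e6 : (1 - x) / 2 - (x - 1) / 2 = 1 - x := by ring
    rw [e4] at h1; rw [e5] at h2; rw [e6] at h3
    simp only [Polynomial.eval_add, Polynomial.eval_mul, Polynomial.eval_C, Polynomial.eval_X]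
    linear_combination h1 + h3 - h2
  · rintro ⟨a, b, rfl⟩ x y
    simp only [Polynomial.eval_add, Polynomial.eval_mul, Polynomial.eval_C, Polynomial.eval_X]
    ring
end

section
/- Let f be a nonzero one-variable complex polynomial. If (x+2y)·f(−y)·f(x+y) = (x+2y)·f(x) for all complex numbers x and y, then f = 1 (the constant polynomial 1). -/
/-- The functional equation for the coefficient of J¹ in a Virasoro element of 𝔤𝔠₁. -/
theorem stmt_13 (f : Polynomial ℂ) (hf : f ≠ 0)
    (h : ∀ x y : ℂ, (x + 2 * y) * f.eval (-y) * f.eval (x + y) = (x + 2 * y) * f.eval x) :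
    f = 1 := by
  -- Step 1: remove the (x+2y) factor using continuity/density.
  have key : ∀ x y : ℂ, f.eval (-y) * f.eval (x + y) = f.eval x := by
    intro x y
    have hc1 : Continuous fun x : ℂ => f.eval (-y) * f.eval (x + y) :=
      continuous_const.mul (f.continuous.comp (continuous_id.add continuous_const))
    have hc2 : Continuous fun x : ℂ => f.eval x := f.continuous
    have heq : Set.EqOn (fun x : ℂ => f.eval (-y) * f.eval (x + y))
        (fun x : ℂ => f.eval x) ({-(2 * y)}ᶜ) := by
      intro z hz
      have hz' : z + 2 * y ≠ 0 := by
        intro h0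
        apply hz
        simp only [Set.mem_singleton_iff]
        linear_combination h0
      have hzy := h z y
      rw [mul_assoc] at hzy
      exact mul_left_cancel₀ hz' hzy
    have := Continuous.ext_on (dense_compl_singleton (-(2 * y))) hc1 hc2 heq
    exact congrFun this x
  -- Step 2: f.eval 0 = 1.
  obtain ⟨x0, hx0⟩ : ∃ x0 : ℂ, f.eval x0 ≠ 0 := by
    by_contra hc
    push_neg at hc
    exact hf (Polynomial.funext (fun z => by simpa using hc z))
  have h0 : f.eval 0 = 1 := by
    have h' := key x0 0
    simp only [neg_zero, add_zero] at h'
    have : f.eval 0 * f.eval x0 = 1 * f.eval x0 := by rw [one_mul]; exact h'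
    exact mul_right_cancel₀ hx0 this
  -- Step 3: f has no roots.
  have hnr : ∀ z : ℂ, f.eval z ≠ 0 := by
    intro z hz
    have h' := key 0 (-z)
    simp [hz, h0] at h'
  -- Step 4: f is constant.
  have hdeg : f.natDegree = 0 := by
    by_contra hd
    have hpos : 0 < f.degree := by
      rw [← Polynomial.natDegree_pos_iff_degree_pos]
      omega
    obtain ⟨z, hz⟩ := Complex.exists_root hpos
    exact hnr z hz
  obtain ⟨c, rfl⟩ := Polynomial.natDegree_eq_zero.mp hdeg
  have hc1 : c = 1 := by simpa using h0
  rw [hc1, Polynomial.C_1]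
end
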